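/- Fix d ∈ (0,2) and set ζ_{d,r} = d(2−d)(4−d)⋯(2r−2−d)/(2^r r!). For a positive integer k define ζ_k(y) = Σ_{r=1}^∞ ζ_{d,r}·(y^{2r}/(1·3⋯(2r−1)))·((k+1)(k+3)⋯(k+2r−1)/(k+y²)^r), a convergent series for every y ∈ ℝ. Then for every fixed y ∈ ℝ, lim_{k→∞} ζ_k(y) = Σ_{r=1}^∞ ζ_{d,r}·y^{2r}/(1·3⋯(2r−1)). -/

import Mathlib

/-
Write the `r`-th term of `ζ_k(y)` as `ζ_{d,r} ∏_{i<r} f_k(i)` with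
`f_k(i) = y² (k + 2i + 1) / ((2i + 1)(k + y²))`. Since `0 ≤ ζ_{d,r} ≤ 1`, everything is controlled
by the products of the factors. For fixed `k`, `f_k(i) → y² / (k + y²) < 1` as `i → ∞`, so the
series converges by the ratio test. Once `k ≥ y²`, `f_k(i) ≤ 1/2 + y² / (2i + 1)`, whose partial
products are again summable by the ratio test, and `f_k(i) → y² / (2i + 1)` as `k → ∞`; dominated
convergence for series (Tannery's theorem) gives the limit.
-/

open Filter Topology Finset

/-- `zetaCoeff d r` is the coefficient `ζ_{d,r+1}`. -/
noncomputable def zetaCoeff (d : ℝ) (r : ℕ) : ℝ :=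
  (d * ∏ i ∈ range r, (2 * ((i : ℝ) + 1) - d)) / (2 ^ (r + 1) * ((r + 1).factorial : ℝ))

lemma zetaCoeff_zero (d : ℝ) : zetaCoeff d 0 = d / 2 := by
  simp [zetaCoeff]

lemma zetaCoeff_succ (d : ℝ) (r : ℕ) :
    zetaCoeff d (r + 1) = zetaCoeff d r * ((2 * ((r : ℝ) + 1) - d) / (2 * ((r : ℝ) + 2))) := by
  rw [zetaCoeff, zetaCoeff, prod_range_succ, Nat.factorial_succ (r + 1)]
  push_cast
  field_simp
  ring

lemma zetaCoeff_mem_Icc {d : ℝ} (hd : d ∈ Set.Icc (0 : ℝ) 2) (r : ℕ) :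
    zetaCoeff d r ∈ Set.Icc (0 : ℝ) 1 := by
  obtain ⟨hd0, hd2⟩ := hd
  induction r with
  | zero => rw [zetaCoeff_zero]; constructor <;> linarith
  | succ r ih =>
    have hr : (0 : ℝ) ≤ r := r.cast_nonneg
    have hq0 : 0 ≤ (2 * ((r : ℝ) + 1) - d) / (2 * ((r : ℝ) + 2)) := by
      apply div_nonneg <;> linarith
    have hq1 : (2 * ((r : ℝ) + 1) - d) / (2 * ((r : ℝ) + 2)) ≤ 1 := by
      rw [div_le_one (by positivity)]; linarith
    rw [zetaCoeff_succ]
    exact ⟨mul_nonneg ih.1 hq0, mul_le_one₀ ih.2 hq0 hq1⟩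

lemma norm_zetaCoeff_le_one {d : ℝ} (hd : d ∈ Set.Icc (0 : ℝ) 2) (r : ℕ) :
    ‖zetaCoeff d r‖ ≤ 1 := by
  obtain ⟨h0, h1⟩ := zetaCoeff_mem_Icc hd r
  rwa [Real.norm_of_nonneg h0]

lemma summable_prod_range_of_tendsto_lt_one {b : ℕ → ℝ} (hb : ∀ i, 0 ≤ b i) {L : ℝ} (hL : L < 1)
    (hbL : Tendsto b atTop (𝓝 L)) : Summable fun n => ∏ i ∈ range n, b i := by
  obtain ⟨ρ, hLρ, hρ1⟩ := exists_between hL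
  refine summable_of_ratio_norm_eventually_le hρ1
    ((hbL.eventually_lt_const hLρ).mono fun n hn => ?_)
  have hP : 0 ≤ ∏ i ∈ range n, b i := prod_nonneg fun i _ => hb i
  rw [prod_range_succ, Real.norm_of_nonneg (mul_nonneg hP (hb n)), Real.norm_of_nonneg hP,
    mul_comm ρ]
  exact mul_le_mul_of_nonneg_left hn.le hP

lemma norm_mul_prod_le {ι : Type*} {s : Finset ι} {a : ℝ} {f b : ι → ℝ} (ha : ‖a‖ ≤ 1)
    (hfb : ∀ i ∈ s, ‖f i‖ ≤ b i) : ‖a * ∏ i ∈ s, f i‖ ≤ ∏ i ∈ s, b i := by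
  have hP : ‖∏ i ∈ s, f i‖ ≤ ∏ i ∈ s, b i := by
    rw [norm_prod]
    exact prod_le_prod (fun i _ => norm_nonneg _) hfb
  rw [norm_mul]
  exact (mul_le_of_le_one_left (norm_nonneg _) ha).trans hP

lemma summable_mul_prod_range_succ {a b : ℕ → ℝ} (ha : ∀ r, ‖a r‖ ≤ 1) (hb : ∀ i, 0 ≤ b i)
    (hsum : Summable fun n => ∏ i ∈ range n, b i) :
    Summable fun r => a r * ∏ i ∈ range (r + 1), b i :=
  ((summable_nat_add_iff 1).mpr hsum).of_norm_bounded fun r =>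
    norm_mul_prod_le (ha r) fun i _ => (Real.norm_of_nonneg (hb i)).le

lemma tendsto_tsum_mul_prod_range_succ {α : Type*} {l : Filter α} {a : ℕ → ℝ}
    (ha : ∀ r, ‖a r‖ ≤ 1) {f : α → ℕ → ℝ} {g b : ℕ → ℝ}
    (hfg : ∀ i, Tendsto (f · i) l (𝓝 (g i))) (hfb : ∀ᶠ x in l, ∀ i, ‖f x i‖ ≤ b i)
    (hsum : Summable fun n => ∏ i ∈ range n, b i) :
    Tendsto (fun x => ∑' r, a r * ∏ i ∈ range (r + 1), f x i) l
      (𝓝 (∑' r, a r * ∏ i ∈ range (r + 1), g i)) :=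
  tendsto_tsum_of_dominated_convergence ((summable_nat_add_iff 1).mpr hsum)
    (fun r => (tendsto_finsetProd _ fun i _ => hfg i).const_mul (a r))
    (hfb.mono fun _ hx r => norm_mul_prod_le (ha r) fun i _ => hx i)

noncomputable def tFactor (k y : ℝ) (i : ℕ) : ℝ :=
  y ^ 2 * (k + 2 * i + 1) / ((2 * i + 1) * (k + y ^ 2))

lemma prod_range_tFactor (k y : ℝ) (r : ℕ) :
    ∏ i ∈ range r, tFactor k y i =
      y ^ (2 * r) / (∏ i ∈ range r, (2 * (i : ℝ) + 1)) *
        ((∏ i ∈ range r, (k + 2 * (i : ℝ) + 1)) / (k + y ^ 2) ^ r) := by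
  simp only [tFactor, prod_div_distrib, prod_mul_distrib, prod_const, card_range, pow_mul]
  rw [div_mul_div_comm]

lemma prod_range_sq_div (y : ℝ) (r : ℕ) :
    ∏ i ∈ range r, y ^ 2 / (2 * (i : ℝ) + 1) = y ^ (2 * r) / ∏ i ∈ range r, (2 * (i : ℝ) + 1) := by
  rw [prod_div_distrib, prod_const, card_range, pow_mul]

lemma tFactor_nonneg {k : ℝ} (hk : 0 ≤ k) (y : ℝ) (i : ℕ) : 0 ≤ tFactor k y i := by
  unfold tFactor
  positivity

lemma tFactor_le {k y : ℝ} (hk : 0 < k) (hyk : y ^ 2 ≤ k) (i : ℕ) :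
    tFactor k y i ≤ 1 / 2 + y ^ 2 / (2 * i + 1) := by
  have hi : (0 : ℝ) < 2 * i + 1 := by positivity
  rw [tFactor, div_add_div _ _ two_ne_zero hi.ne', div_le_div_iff₀ (by positivity) (by positivity)]
  nlinarith [mul_nonneg (mul_nonneg hi.le hi.le) (sub_nonneg.2 hyk),
    mul_nonneg hi.le (sq_nonneg (y ^ 2))]

lemma tendsto_tFactor_atTop {k : ℝ} (hk : 0 < k) (y : ℝ) :
    Tendsto (tFactor k y) atTop (𝓝 (y ^ 2 / (k + y ^ 2))) := by
  have hky : k + y ^ 2 ≠ 0 := by positivity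
  have := tendsto_add_mul_div_add_mul_atTop_nhds (y ^ 2 * (k + 1)) (k + y ^ 2) (2 * y ^ 2)
    (mul_ne_zero two_ne_zero hky)
  rw [mul_div_mul_left _ _ two_ne_zero] at this
  refine this.congr fun i => ?_
  rw [tFactor]
  ring

lemma tendsto_tFactor_natCast_atTop (y : ℝ) (i : ℕ) :
    Tendsto (fun k : ℕ => tFactor k y i) atTop (𝓝 (y ^ 2 / (2 * i + 1))) := by
  refine (tendsto_add_mul_div_add_mul_atTop_nhds (y ^ 2 * (2 * i + 1)) ((2 * i + 1) * y ^ 2)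
    (y ^ 2) (by positivity : (2 * (i : ℝ) + 1) ≠ 0)).congr fun k => ?_
  rw [tFactor]
  ring

lemma tendsto_half_add_sq_div (y : ℝ) :
    Tendsto (fun i : ℕ => 1 / 2 + y ^ 2 / (2 * i + 1)) atTop (𝓝 (1 / 2)) := by
  have h : Tendsto (fun i : ℕ => 2 * (i : ℝ) + 1) atTop atTop :=
    tendsto_atTop_add_const_right _ 1 (tendsto_natCast_atTop_atTop.const_mul_atTop two_pos)
  simpa using tendsto_const_nhds.add (tendsto_const_nhds.div_atTop h)

/-- The Student-t zeta function `ζ_k` converges pointwise to the Gaussian zeta function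
`ζ_∞` as `k → ∞`: the series defining `ζ_k(y)` is convergent for every `y`, and for every
fixed `y`, `ζ_k(y) → Σ_{r≥1} ζ_{d,r} y^{2r}/(1·3⋯(2r-1))`.  (Sums are indexed by `r ∈ ℕ`,
corresponding to the term of index `r + 1 ≥ 1`.) -/
theorem t_zeta_tendsto_gaussian_zeta (d : ℝ) (hd : d ∈ Set.Ioo (0 : ℝ) 2) :
    (∀ k : ℕ, 1 ≤ k → ∀ y : ℝ, Summable (fun r : ℕ =>
      (d * ∏ i ∈ Finset.range r, (2 * ((i : ℝ) + 1) - d)) /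
          (2 ^ (r + 1) * (Nat.factorial (r + 1) : ℝ)) *
        (y ^ (2 * (r + 1)) / ∏ i ∈ Finset.range (r + 1), (2 * (i : ℝ) + 1)) *
        ((∏ i ∈ Finset.range (r + 1), ((k : ℝ) + 2 * (i : ℝ) + 1)) /
          ((k : ℝ) + y ^ 2) ^ (r + 1)))) ∧
    (∀ y : ℝ, Tendsto
      (fun k : ℕ => ∑' r : ℕ,
        (d * ∏ i ∈ Finset.range r, (2 * ((i : ℝ) + 1) - d)) /
            (2 ^ (r + 1) * (Nat.factorial (r + 1) : ℝ)) *
          (y ^ (2 * (r + 1)) / ∏ i ∈ Finset.range (r + 1), (2 * (i : ℝ) + 1)) *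
          ((∏ i ∈ Finset.range (r + 1), ((k : ℝ) + 2 * (i : ℝ) + 1)) /
            ((k : ℝ) + y ^ 2) ^ (r + 1)))
      atTop
      (𝓝 (∑' r : ℕ,
        (d * ∏ i ∈ Finset.range r, (2 * ((i : ℝ) + 1) - d)) /
            (2 ^ (r + 1) * (Nat.factorial (r + 1) : ℝ)) *
          (y ^ (2 * (r + 1)) / ∏ i ∈ Finset.range (r + 1), (2 * (i : ℝ) + 1))))) := by
  have ha := norm_zetaCoeff_le_one (Set.Ioo_subset_Icc_self hd)
  refine ⟨fun k hk y => ?_, fun y => ?_⟩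
  · have hk0 : (0 : ℝ) < k := by exact_mod_cast hk
    have hf0 := tFactor_nonneg hk0.le y
    have hsum := summable_mul_prod_range_succ ha hf0
      (summable_prod_range_of_tendsto_lt_one hf0 ((div_lt_one (by positivity)).2 (by linarith))
        (tendsto_tFactor_atTop hk0 y))
    refine hsum.congr fun r => ?_
    rw [prod_range_tFactor, ← mul_assoc, zetaCoeff]
  · have hfb : ∀ᶠ k : ℕ in atTop, ∀ i, ‖tFactor k y i‖ ≤ 1 / 2 + y ^ 2 / (2 * i + 1) := by
      filter_upwards [tendsto_natCast_atTop_atTop.eventually_ge_atTop (y ^ 2 + 1)] with k hk i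
      have hk0 : (0 : ℝ) < k := (by positivity : (0 : ℝ) < y ^ 2 + 1).trans_le hk
      rw [Real.norm_of_nonneg (tFactor_nonneg hk0.le y i)]
      exact tFactor_le hk0 (by linarith) i
    have hsum := summable_prod_range_of_tendsto_lt_one (fun i => by positivity) (by norm_num)
      (tendsto_half_add_sq_div y)
    have h := tendsto_tsum_mul_prod_range_succ ha (tendsto_tFactor_natCast_atTop y) hfb hsum
    simp only [zetaCoeff, prod_range_tFactor, prod_range_sq_div, ← mul_assoc] at h
    exact h
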